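/- arXiv:1601.05921 — 5 statements merged into one kernel-verified Lean document; each statement's English description precedes it below -/
import Mathlib

section
/- If a directed graph G on N nodes with L edges is quasi-strongly connected (has a directed spanning tree), then the edge Laplacian L_e = E^T E_⊙^w has exactly N−1 nonzero eigenvalues, all of which lie in the open right-half complex plane, and L−N+1 zero eigenvalues. -/
/-!
The graph Laplacian `L_G = E_⊙^w Eᵀ` has nonpositive off-diagonal entries and zero row sums,
so by Gershgorin every eigenvalue lies in a disc `|λ - d| ≤ d` with `d ≥ 0`; a nonzero one
therefore has positive real part. A maximum principle, propagated from the root along the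
spanning tree, shows that the kernel of `L_G` is spanned by `1` and that `L_G x` can only be
constant if it vanishes, so `0` is a simple root of the characteristic polynomial of `L_G`.
Finally `X^N χ(Eᵀ E_⊙^w) = X^L χ(E_⊙^w Eᵀ)`: the edge Laplacian has the nonzero spectrum of
`L_G` and `L - N + 1` zero eigenvalues.
-/

open Matrix Polynomial

lemma Complex.re_pos_of_norm_sub_ofReal_le {μ : ℂ} {d : ℝ} (h : ‖μ - d‖ ≤ d)
    (hμ : μ ≠ 0) : 0 < μ.re := by
  have hd : 0 ≤ d := (norm_nonneg _).trans h
  have hsq : (μ.re - d) ^ 2 + μ.im ^ 2 ≤ d ^ 2 := by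
    have := pow_le_pow_left₀ (norm_nonneg _) h 2
    rwa [Complex.sq_norm, Complex.normSq_apply, sub_re, sub_im, ofReal_re, ofReal_im, sub_zero,
      ← sq, ← sq] at this
  have hpos := Complex.normSq_pos.mpr hμ
  rw [Complex.normSq_apply] at hpos
  nlinarith

lemma Module.End.maxGenEigenspace_zero_eq_ker {R M : Type*} [CommRing R] [AddCommGroup M]
    [Module R M] {f : Module.End R M} (hf : ∀ x, f (f x) = 0 → f x = 0) :
    f.maxGenEigenspace 0 = LinearMap.ker f := by
  refine le_antisymm (fun x hx => ?_) (fun x hx => ?_)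
  · obtain ⟨k, hk⟩ := (f.mem_maxGenEigenspace 0 x).mp hx
    rw [zero_smul, sub_zero] at hk
    clear hx
    induction k generalizing x with
    | zero => simp_all
    | succ k ih => exact hf x (ih (f x) (by rwa [pow_succ, Module.End.mul_apply] at hk))
  · exact (f.mem_maxGenEigenspace 0 x).mpr ⟨1, by simpa using hx⟩

namespace Polynomial

variable {R : Type*} [CommRing R] [IsDomain R] {p : R[X]}

lemma roots_X_pow_mul (hp : p ≠ 0) (m : ℕ) : (X ^ m * p).roots = m • {0} + p.roots := by
  rw [roots_mul (mul_ne_zero (pow_ne_zero m X_ne_zero) hp), roots_X_pow]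

lemma count_zero_roots_X_pow_mul [DecidableEq R] (hp : p ≠ 0) (m : ℕ) :
    (X ^ m * p).roots.count 0 = m + p.roots.count 0 := by
  simp [roots_X_pow_mul hp]

lemma filter_ne_zero_roots_X_pow_mul [DecidableEq R] (hp : p ≠ 0) (m : ℕ) :
    (X ^ m * p).roots.filter (· ≠ 0) = p.roots.filter (· ≠ 0) := by
  simp [roots_X_pow_mul hp, Multiset.filter_add]

end Polynomial

namespace Matrix

variable {n : Type*} [Fintype n]

structure IsLaplacian (A : Matrix n n ℝ) : Prop where
  off_diag_nonpos : ∀ i j, i ≠ j → A i j ≤ 0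
  mulVec_one : A *ᵥ 1 = 0

/-- Every vertex is reachable from `r` in the digraph with an edge `j → i` whenever
`A i j < 0`. -/
def IsSpanningRoot (A : Matrix n n ℝ) (r : n) : Prop :=
  ∀ i, Relation.ReflTransGen (fun j i => A i j < 0) r i

namespace IsLaplacian

variable {A : Matrix n n ℝ} {r : n}

lemma sum_row_eq_zero (hA : A.IsLaplacian) (i : n) : ∑ j, A i j = 0 := by
  simpa [mulVec, dotProduct] using congrFun hA.mulVec_one i

lemma mulVec_apply_eq_sum (hA : A.IsLaplacian) (u : n → ℝ) (i : n) :
    (A *ᵥ u) i = ∑ j, -A i j * (u i - u j) := by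
  have hrow : ∑ j, A i j * u i = 0 := by rw [← Finset.sum_mul, hA.sum_row_eq_zero, zero_mul]
  calc (A *ᵥ u) i = ∑ j, A i j * u j - ∑ j, A i j * u i := by rw [hrow, sub_zero]; rfl
    _ = ∑ j, -A i j * (u i - u j) := by rw [← Finset.sum_sub_distrib]; congr 1; ext j; ring

lemma mul_sub_nonneg_of_isMax (hA : A.IsLaplacian) {u : n → ℝ} {i : n}
    (hu : ∀ j, u j ≤ u i) (j : n) : 0 ≤ -A i j * (u i - u j) := by
  rcases eq_or_ne i j with rfl | hij
  · simp
  · exact mul_nonneg (neg_nonneg.mpr (hA.off_diag_nonpos i j hij)) (sub_nonneg.mpr (hu j))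

lemma mulVec_apply_nonneg_of_isMax (hA : A.IsLaplacian) {u : n → ℝ} {i : n}
    (hu : ∀ j, u j ≤ u i) : 0 ≤ (A *ᵥ u) i := by
  rw [hA.mulVec_apply_eq_sum]
  exact Finset.sum_nonneg fun j _ => hA.mul_sub_nonneg_of_isMax hu j

lemma apply_eq_of_isMax_of_mulVec_apply_eq_zero (hA : A.IsLaplacian) {u : n → ℝ} {i j : n}
    (hu : ∀ j, u j ≤ u i) (h0 : (A *ᵥ u) i = 0) (hij : A i j < 0) : u j = u i := by
  rw [hA.mulVec_apply_eq_sum] at h0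
  have hterm := (Finset.sum_eq_zero_iff_of_nonneg fun j _ => hA.mul_sub_nonneg_of_isMax hu j).mp
    h0 j (Finset.mem_univ j)
  rcases mul_eq_zero.mp hterm with h | h
  · linarith
  · linarith

lemma apply_eq_of_reflTransGen (hA : A.IsLaplacian) {u : n → ℝ} (hu : A *ᵥ u = 0) {a b : n}
    (hab : Relation.ReflTransGen (fun j i => A i j < 0) a b) (hb : ∀ j, u j ≤ u b) :
    u a = u b := by
  induction hab with
  | refl => rfl
  | tail _ hcb ih =>
    have hc := hA.apply_eq_of_isMax_of_mulVec_apply_eq_zero hb (congrFun hu _) hcb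
    rw [ih (hc ▸ hb), hc]

lemma apply_eq_of_mulVec_eq_zero (hA : A.IsLaplacian) (hr : A.IsSpanningRoot r) {u : n → ℝ}
    (hu : A *ᵥ u = 0) (i : n) : u i = u r := by
  have : Nonempty n := ⟨r⟩
  obtain ⟨iMax, hMax⟩ := Finite.exists_max u
  obtain ⟨iMin, hMin⟩ := Finite.exists_max (-u)
  have hrMax := hA.apply_eq_of_reflTransGen hu (hr iMax) hMax
  have hrMin := hA.apply_eq_of_reflTransGen (u := -u) (by rw [mulVec_neg, hu, neg_zero])
    (hr iMin) hMin
  simp only [Pi.neg_apply, neg_inj, neg_le_neg_iff] at hrMin hMin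
  linarith [hMax i, hMin i]

lemma eq_zero_of_mulVec_eq_const (hA : A.IsLaplacian) [Nonempty n] {u : n → ℝ} {c : ℝ}
    (hu : A *ᵥ u = fun _ => c) : c = 0 := by
  obtain ⟨iMax, hMax⟩ := Finite.exists_max u
  obtain ⟨iMin, hMin⟩ := Finite.exists_max (-u)
  have hcMax := hA.mulVec_apply_nonneg_of_isMax hMax
  have hcMin := hA.mulVec_apply_nonneg_of_isMax hMin
  rw [hu] at hcMax
  rw [mulVec_neg, hu, Pi.neg_apply] at hcMin
  linarith

lemma mulVec_eq_zero_of_mulVec_mulVec_eq_zero (hA : A.IsLaplacian) (hr : A.IsSpanningRoot r)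
    {x : n → ℝ} (hx : A *ᵥ (A *ᵥ x) = 0) : A *ᵥ x = 0 := by
  have : Nonempty n := ⟨r⟩
  have hconst : A *ᵥ x = fun _ => (A *ᵥ x) r := funext (hA.apply_eq_of_mulVec_eq_zero hr hx)
  rw [hconst, hA.eq_zero_of_mulVec_eq_const hconst]
  rfl

variable [DecidableEq n]

lemma sum_erase_abs_eq_diag (hA : A.IsLaplacian) (k : n) :
    ∑ j ∈ Finset.univ.erase k, |A k j| = A k k := by
  have hsum := Finset.sum_erase_add Finset.univ (A k) (Finset.mem_univ k)
  rw [hA.sum_row_eq_zero] at hsum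
  rw [Finset.sum_congr rfl fun j hj =>
    abs_of_nonpos (hA.off_diag_nonpos k j (Finset.ne_of_mem_erase hj).symm),
    Finset.sum_neg_distrib]
  linarith

lemma ker_toLin'_eq_span (hA : A.IsLaplacian) (hr : A.IsSpanningRoot r) :
    LinearMap.ker (toLin' A) = ℝ ∙ (1 : n → ℝ) := by
  refine le_antisymm (fun x hx => ?_) (Submodule.span_singleton_le_iff_mem _ _ |>.mpr ?_)
  · rw [LinearMap.mem_ker, toLin'_apply] at hx
    exact Submodule.mem_span_singleton.mpr
      ⟨x r, funext fun i => by simp [hA.apply_eq_of_mulVec_eq_zero hr hx i]⟩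
  · rw [LinearMap.mem_ker, toLin'_apply, hA.mulVec_one]

lemma natTrailingDegree_charpoly (hA : A.IsLaplacian) (hr : A.IsSpanningRoot r) :
    A.charpoly.natTrailingDegree = 1 := by
  have hsemisimple : ∀ x, toLin' A (toLin' A x) = 0 → toLin' A x = 0 := by
    simpa only [toLin'_apply] using fun x => hA.mulVec_eq_zero_of_mulVec_mulVec_eq_zero hr
  rw [← charpoly_toLin', ← LinearMap.finrank_maxGenEigenspace_zero_eq,
    Module.End.maxGenEigenspace_zero_eq_ker hsemisimple, hA.ker_toLin'_eq_span hr,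
    finrank_span_singleton (Function.ne_iff.mpr ⟨r, one_ne_zero⟩)]

lemma count_zero_roots_charpoly_map_ofReal (hA : A.IsLaplacian) (hr : A.IsSpanningRoot r) :
    (A.map Complex.ofReal).charpoly.roots.count 0 = 1 := by
  have hmap : (A.map Complex.ofReal).charpoly = A.charpoly.map Complex.ofRealHom :=
    charpoly_map A Complex.ofRealHom
  rw [count_roots, hmap, ← map_zero Complex.ofRealHom,
    ← eq_rootMultiplicity_map Complex.ofReal_injective, rootMultiplicity_eq_natTrailingDegree',
    hA.natTrailingDegree_charpoly hr]

lemma card_filter_ne_zero_roots_charpoly_map_ofReal (hA : A.IsLaplacian)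
    (hr : A.IsSpanningRoot r) :
    Multiset.card ((A.map Complex.ofReal).charpoly.roots.filter (· ≠ 0)) =
      Fintype.card n - 1 := by
  have hcard : Multiset.card (A.map Complex.ofReal).charpoly.roots = Fintype.card n := by
    rw [splits_iff_card_roots.mp (IsAlgClosed.splits _), charpoly_natDegree_eq_dim]
  have hsplit := congrArg Multiset.card
    (Multiset.filter_add_not (· ≠ 0) (A.map Complex.ofReal).charpoly.roots)
  simp only [ne_eq, not_not, Multiset.filter_eq', hA.count_zero_roots_charpoly_map_ofReal hr,
    Multiset.card_add, Multiset.card_replicate, hcard] at hsplit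
  simp only [ne_eq]
  omega

lemma re_pos_of_mem_roots_charpoly_map_ofReal (hA : A.IsLaplacian) {μ : ℂ}
    (hμ : μ ∈ (A.map Complex.ofReal).charpoly.roots) (hμ0 : μ ≠ 0) : 0 < μ.re := by
  have heig : Module.End.HasEigenvalue (toLin' (A.map Complex.ofReal)) μ := by
    rw [Module.End.hasEigenvalue_iff_isRoot_charpoly, charpoly_toLin']
    exact (mem_roots (charpoly_monic _).ne_zero).mp hμ
  obtain ⟨k, hk⟩ := eigenvalue_mem_ball heig
  simp only [map_apply, Complex.norm_real, Real.norm_eq_abs] at hk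
  rw [hA.sum_erase_abs_eq_diag, Metric.mem_closedBall, dist_eq_norm] at hk
  exact Complex.re_pos_of_norm_sub_ofReal_le hk hμ0

end IsLaplacian

end Matrix

section IncidenceMatrix

variable {V ι : Type*} [DecidableEq V] {src tgt : ι → V} {w : ι → ℝ}

def incidenceMatrix (src tgt : ι → V) : Matrix V ι ℝ :=
  of fun i k => if i = src k then 1 else if i = tgt k then -1 else 0

def weightedInIncidenceMatrix (tgt : ι → V) (w : ι → ℝ) : Matrix V ι ℝ :=
  of fun i k => if i = tgt k then -w k else 0

lemma transpose_incidenceMatrix_mulVec_one [Fintype V] (hst : ∀ k, src k ≠ tgt k) :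
    (incidenceMatrix src tgt)ᵀ *ᵥ 1 = 0 := by
  ext k
  have hcol : ∀ i, incidenceMatrix src tgt i k =
      (if i = src k then 1 else 0) - (if i = tgt k then 1 else 0) := by
    intro i
    simp only [incidenceMatrix, of_apply]
    split_ifs <;> grind
  simp [mulVec, dotProduct, hcol, Finset.sum_sub_distrib]

lemma weightedInIncidenceMatrix_mul_transpose_apply_of_ne [Fintype ι] {i j : V} (hij : i ≠ j) :
    (weightedInIncidenceMatrix tgt w * (incidenceMatrix src tgt)ᵀ) i j =
      -∑ k, if tgt k = i ∧ src k = j then w k else 0 := by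
  rw [mul_apply, ← Finset.sum_neg_distrib]
  refine Finset.sum_congr rfl fun k _ => ?_
  simp only [weightedInIncidenceMatrix, incidenceMatrix, transpose_apply, of_apply]
  split_ifs <;> grind

lemma weightedInIncidenceMatrix_mul_transpose_apply_neg [Fintype ι] (hst : ∀ k, src k ≠ tgt k)
    (hw : ∀ k, 0 < w k) (k : ι) :
    (weightedInIncidenceMatrix tgt w * (incidenceMatrix src tgt)ᵀ) (tgt k) (src k) < 0 := by
  rw [weightedInIncidenceMatrix_mul_transpose_apply_of_ne (hst k).symm, neg_neg_iff_pos]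
  calc 0 < w k := hw k
    _ = if tgt k = tgt k ∧ src k = src k then w k else 0 := by simp
    _ ≤ ∑ k', if tgt k' = tgt k ∧ src k' = src k then w k' else 0 :=
      Finset.single_le_sum (f := fun k' => if tgt k' = tgt k ∧ src k' = src k then w k' else 0)
        (fun k' _ => by split_ifs <;> simp [(hw k').le]) (Finset.mem_univ k)

lemma isLaplacian_weightedInIncidenceMatrix_mul_transpose [Fintype V] [Fintype ι]
    (hst : ∀ k, src k ≠ tgt k) (hw : ∀ k, 0 ≤ w k) :
    (weightedInIncidenceMatrix tgt w * (incidenceMatrix src tgt)ᵀ).IsLaplacian where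
  off_diag_nonpos i j hij := by
    rw [weightedInIncidenceMatrix_mul_transpose_apply_of_ne hij, neg_nonpos]
    exact Finset.sum_nonneg fun k _ => by split_ifs <;> simp [hw k]
  mulVec_one := by
    rw [← mulVec_mulVec, transpose_incidenceMatrix_mulVec_one hst, mulVec_zero]

end IncidenceMatrix

theorem edge_laplacian_spectrum_of_quasi_strongly_connected_general
    (N L : ℕ) (src tgt : Fin L → Fin N) (hst : ∀ k, src k ≠ tgt k)
    (w : Fin L → ℝ) (hw : ∀ k, 0 < w k)
    (hqsc : ∃ r : Fin N, ∀ i : Fin N,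
      Relation.ReflTransGen (fun a b => ∃ k : Fin L, src k = a ∧ tgt k = b) r i)
    (E Eow : Matrix (Fin N) (Fin L) ℝ)
    (hE : ∀ i k, E i k = if i = src k then 1 else if i = tgt k then -1 else 0)
    (hEow : ∀ i k, Eow i k = if i = tgt k then -(w k) else 0) :
    ((Eᵀ * Eow).map Complex.ofReal).charpoly.roots.count 0 = L - (N - 1) ∧
    Multiset.card (((Eᵀ * Eow).map Complex.ofReal).charpoly.roots.filter (· ≠ 0)) = N - 1 ∧
    ∀ lam ∈ ((Eᵀ * Eow).map Complex.ofReal).charpoly.roots, lam ≠ 0 → 0 < lam.re := by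
  obtain ⟨r, hr⟩ := hqsc
  have hE : E = incidenceMatrix src tgt := Matrix.ext hE
  have hEow : Eow = weightedInIncidenceMatrix tgt w := Matrix.ext hEow
  set A := Eow * Eᵀ
  have hA : A.IsLaplacian := by
    subst hE hEow; exact isLaplacian_weightedInIncidenceMatrix_mul_transpose hst (hw · |>.le)
  have hAr : A.IsSpanningRoot r := fun i => Relation.ReflTransGen.mono
    (fun _ _ ⟨k, hsrc, htgt⟩ => by
      subst hE hEow hsrc htgt; exact weightedInIncidenceMatrix_mul_transpose_apply_neg hst hw k)
    _ _ (hr i)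
  set p := ((Eᵀ * Eow).map Complex.ofReal).charpoly
  have hcomm : X ^ N * p = X ^ L * (A.map Complex.ofReal).charpoly := by
    have := charpoly_mul_comm' (Eᵀ.map Complex.ofRealHom) (Eow.map Complex.ofRealHom)
    rwa [← Matrix.map_mul, ← Matrix.map_mul, Fintype.card_fin, Fintype.card_fin] at this
  have hp : p ≠ 0 := (charpoly_monic _).ne_zero
  have hq : (A.map Complex.ofReal).charpoly ≠ 0 := (charpoly_monic _).ne_zero
  have hcount := congrArg (·.roots.count 0) hcomm
  have hfilter := congrArg (·.roots.filter (· ≠ 0)) hcomm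
  simp only [count_zero_roots_X_pow_mul hp, count_zero_roots_X_pow_mul hq,
    hA.count_zero_roots_charpoly_map_ofReal hAr, filter_ne_zero_roots_X_pow_mul hp,
    filter_ne_zero_roots_X_pow_mul hq] at hcount hfilter
  refine ⟨by have := r.pos; omega, ?_, fun μ hμ hμ0 => ?_⟩
  · rw [hfilter, hA.card_filter_ne_zero_roots_charpoly_map_ofReal hAr, Fintype.card_fin]
  · have hμ' : μ ∈ p.roots.filter (· ≠ 0) := Multiset.mem_filter.mpr ⟨hμ, hμ0⟩
    rw [hfilter] at hμ'
    exact hA.re_pos_of_mem_roots_charpoly_map_ofReal (Multiset.mem_filter.mp hμ').1 hμ0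

/-- If a directed graph `G` on `N` nodes with `L` edges is quasi-strongly
connected (there is a root from which every node is reachable along directed edges, i.e.
`G` has a directed spanning tree), then the edge Laplacian `L_e = Eᵀ * E_⊙^w` has exactly
`N − 1` nonzero eigenvalues (with multiplicity), all in the open right-half complex plane,
and `L − N + 1` zero eigenvalues. -/
theorem edge_laplacian_spectrum_of_quasi_strongly_connected
    (N L : ℕ) (hN : 0 < N) (src tgt : Fin L → Fin N) (hst : ∀ k, src k ≠ tgt k)
    (w : Fin L → ℝ) (hw : ∀ k, 0 < w k)
    (hqsc : ∃ r : Fin N, ∀ i : Fin N,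
      Relation.ReflTransGen (fun a b => ∃ k : Fin L, src k = a ∧ tgt k = b) r i)
    (E Eow : Matrix (Fin N) (Fin L) ℝ)
    (hE : ∀ i k, E i k = if i = src k then 1 else if i = tgt k then -1 else 0)
    (hEow : ∀ i k, Eow i k = if i = tgt k then -(w k) else 0) :
    ((Eᵀ * Eow).map Complex.ofReal).charpoly.roots.count 0 = L - (N - 1) ∧
    Multiset.card (((Eᵀ * Eow).map Complex.ofReal).charpoly.roots.filter (· ≠ 0)) = N - 1 ∧
    ∀ lam ∈ ((Eᵀ * Eow).map Complex.ofReal).charpoly.roots, lam ≠ 0 → 0 < lam.re :=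
  edge_laplacian_spectrum_of_quasi_strongly_connected_general N L src tgt hst w hw hqsc E Eow hE
    hEow
end

section
/- Under the similarity transformation S_e, the edge Laplacian is block-upper-triangularized: S_e^{-1} L_e S_e = [[ L̂_e , E_T^T E_⊙^w Θ ], [0, 0]], where L̂_e = E_T^T E_⊙^w R^T is the essential edge Laplacian. -/
/-!
Since `ker E` lies in the span of the `L - (N - 1)` columns of `Θ`, rank–nullity gives
`rank E ≥ N - 1`, and as `E = E_T R` factors through `R`, the matrix `R` has full row rank, so
`R Rᵀ` is invertible. Then the top block row is `(RRᵀ)⁻¹ R Rᵀ E_Tᵀ E_⊙^w (…) = E_Tᵀ E_⊙^w (…)`,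
while the bottom one vanishes because `Θᵀ Eᵀ = (E Θ)ᵀ = 0`.
-/

open Matrix

namespace Matrix

variable {K : Type*} [Field K] {m n k : Type*} [Fintype n] [Fintype k]

theorem card_le_rank_add_rank_of_ker_le_range (A : Matrix m n K) (B : Matrix n k K)
    (h : LinearMap.ker A.mulVecLin ≤ LinearMap.range B.mulVecLin) :
    Fintype.card n ≤ A.rank + B.rank := by
  have hker := Submodule.finrank_mono h
  have hrank := LinearMap.finrank_range_add_finrank_ker A.mulVecLin
  rw [Module.finrank_fintype_fun_eq_card] at hrank
  rw [rank, rank]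
  omega

theorem isUnit_of_rank_eq_card [DecidableEq n] (A : Matrix n n K)
    (h : A.rank = Fintype.card n) : IsUnit A := by
  rw [← mulVec_surjective_iff_isUnit, ← Matrix.coe_mulVecLin, ← LinearMap.range_eq_top]
  apply Submodule.eq_top_of_finrank_eq
  rw [Module.finrank_fintype_fun_eq_card]
  exact h

theorem isUnit_mul_transpose_of_rank_eq_card [LinearOrder K] [IsStrictOrderedRing K]
    [Fintype m] [DecidableEq m] (A : Matrix m n K) (h : A.rank = Fintype.card m) :
    IsUnit (A * Aᵀ) :=
  isUnit_of_rank_eq_card _ (by rw [rank_self_mul_transpose, h])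

end Matrix

theorem edge_laplacian_block_triangularization_general
    (N L : ℕ) (hNL : N - 1 ≤ L)
    (E Eow : Matrix (Fin N) (Fin L) ℝ)
    (ET : Matrix (Fin N) (Fin (N - 1)) ℝ)
    (R : Matrix (Fin (N - 1)) (Fin L) ℝ) (hER : E = ET * R)
    (Θ : Matrix (Fin L) (Fin (L - (N - 1))) ℝ)
    (hΘflow : E * Θ = 0)
    (hΘspan : ∀ y : Fin L → ℝ, E.mulVec y = 0 → ∃ c, Θ.mulVec c = y) :
    Matrix.fromRows ((R * Rᵀ)⁻¹ * R) Θᵀ * (Eᵀ * Eow) * Matrix.fromCols Rᵀ Θ =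
      Matrix.fromBlocks (ETᵀ * Eow * Rᵀ) (ETᵀ * Eow * Θ) 0 0 := by
  have hrankE : Fintype.card (Fin L) ≤ E.rank + Θ.rank :=
    card_le_rank_add_rank_of_ker_le_range E Θ fun y hy => hΘspan y hy
  have hRrank : R.rank = Fintype.card (Fin (N - 1)) := by
    have hER' : E.rank ≤ R.rank := hER ▸ rank_mul_le_right ET R
    have := Θ.rank_le_width
    have := R.rank_le_height
    simp only [Fintype.card_fin] at hrankE ⊢
    omega
  have hRinv : (R * Rᵀ)⁻¹ * (R * Rᵀ) = 1 :=
    nonsing_inv_mul _ <|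
      (isUnit_iff_isUnit_det _).mp (isUnit_mul_transpose_of_rank_eq_card R hRrank)
  have htop : (R * Rᵀ)⁻¹ * R * (Eᵀ * Eow) = ETᵀ * Eow := by
    subst hER
    calc (R * Rᵀ)⁻¹ * R * ((ET * R)ᵀ * Eow)
        = (R * Rᵀ)⁻¹ * (R * Rᵀ) * (ETᵀ * Eow) := by simp only [transpose_mul, Matrix.mul_assoc]
      _ = ETᵀ * Eow := by rw [hRinv, Matrix.one_mul]
  have hbot : Θᵀ * (Eᵀ * Eow) = 0 := by
    rw [← Matrix.mul_assoc, ← transpose_mul, hΘflow, transpose_zero, Matrix.zero_mul]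
  rw [fromRows_mul, fromRows_mul_fromCols, htop, hbot, Matrix.zero_mul, Matrix.zero_mul]

/-- Under the similarity transformation `S_e = [Rᵀ, Θ]` (with inverse rows
`(RRᵀ)⁻¹R` and `Θᵀ`), the edge Laplacian `L_e = Eᵀ E_⊙^w` is block-upper-triangularized:
`S_e⁻¹ L_e S_e = [[L̂_e , E_Tᵀ E_⊙^w Θ], [0, 0]]`, where `L̂_e = E_Tᵀ E_⊙^w Rᵀ` is the
essential edge Laplacian. -/
theorem edge_laplacian_block_triangularization
    (N L : ℕ) (hN : 0 < N) (hNL : N - 1 ≤ L)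
    (E Eow : Matrix (Fin N) (Fin L) ℝ)
    (ET : Matrix (Fin N) (Fin (N - 1)) ℝ) (hETrank : ET.rank = N - 1)
    (R : Matrix (Fin (N - 1)) (Fin L) ℝ) (hER : E = ET * R)
    (Θ : Matrix (Fin L) (Fin (L - (N - 1))) ℝ)
    (hΘorth : Θᵀ * Θ = 1) (hΘflow : E * Θ = 0)
    (hΘspan : ∀ y : Fin L → ℝ, E.mulVec y = 0 → ∃ c, Θ.mulVec c = y) :
    Matrix.fromRows ((R * Rᵀ)⁻¹ * R) Θᵀ * (Eᵀ * Eow) * Matrix.fromCols Rᵀ Θ =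
      Matrix.fromBlocks (ETᵀ * Eow * Rᵀ) (ETᵀ * Eow * Θ) 0 0 :=
  edge_laplacian_block_triangularization_general N L hNL E Eow ET R hER Θ hΘflow hΘspan
end

section
/- The essential edge Laplacian L̂_e = E_T^T E_⊙^w R^T has exactly the nonzero eigenvalues of the edge Laplacian L_e = E^T E_⊙^w (with multiplicity), and the characteristic polynomial of L_e satisfies det(λI − L_e) = λ^{L−N+1} det(λI − L̂_e). -/
/-! Since `E = E_T R`, the edge Laplacian is `Rᵀ (E_Tᵀ E_⊙^w)` while the essential one is
`(E_Tᵀ E_⊙^w) Rᵀ`; the characteristic polynomials of `AB` and `BA` differ only by a power of `X`. -/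

open Matrix Polynomial

theorem Polynomial.roots_X_pow_mul_filter_ne_zero {R : Type*} [CommRing R] [IsDomain R]
    [DecidableEq R] (k : ℕ) {q : R[X]} (hq : q ≠ 0) :
    (X ^ k * q).roots.filter (· ≠ 0) = q.roots.filter (· ≠ 0) := by
  rw [roots_mul (mul_ne_zero (pow_ne_zero _ X_ne_zero) hq), roots_X_pow, Multiset.filter_add,
    Multiset.nsmul_singleton, Multiset.filter_eq_nil.mpr fun a ha =>
      not_not_intro (Multiset.eq_of_mem_replicate ha), zero_add]

theorem essential_edge_laplacian_charpoly_general
    (N L : ℕ) (hNL : N - 1 ≤ L)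
    (E Eow : Matrix (Fin N) (Fin L) ℝ)
    (ET : Matrix (Fin N) (Fin (N - 1)) ℝ)
    (R : Matrix (Fin (N - 1)) (Fin L) ℝ) (hER : E = ET * R) :
    (Eᵀ * Eow).charpoly = Polynomial.X ^ (L - (N - 1)) * (ETᵀ * Eow * Rᵀ).charpoly ∧
    ((Eᵀ * Eow).map Complex.ofReal).charpoly.roots.filter (· ≠ 0) =
      ((ETᵀ * Eow * Rᵀ).map Complex.ofReal).charpoly.roots.filter (· ≠ 0) := by
  have hcharpoly :
      (Eᵀ * Eow).charpoly = X ^ (L - (N - 1)) * (ETᵀ * Eow * Rᵀ).charpoly := by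
    rw [hER, transpose_mul, Matrix.mul_assoc,
      charpoly_mul_comm_of_le _ _ (by simpa using hNL), Fintype.card_fin, Fintype.card_fin,
      Matrix.mul_assoc]
  refine ⟨hcharpoly, ?_⟩
  have hcomplexify {n : ℕ} (M : Matrix (Fin n) (Fin n) ℝ) :
      (M.map Complex.ofReal).charpoly = M.charpoly.map Complex.ofRealHom :=
    charpoly_map M Complex.ofRealHom
  rw [hcomplexify, hcomplexify, hcharpoly, Polynomial.map_mul, Polynomial.map_pow, map_X]
  exact roots_X_pow_mul_filter_ne_zero _ ((charpoly_monic _).map _).ne_zero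

/-- The essential edge Laplacian `L̂_e = E_Tᵀ E_⊙^w Rᵀ` has exactly the
nonzero eigenvalues of the edge Laplacian `L_e = Eᵀ E_⊙^w` (with multiplicity): the
characteristic polynomials satisfy `det(λI − L_e) = λ^{L−N+1} det(λI − L̂_e)`, and the
multisets of nonzero complex eigenvalues coincide. -/
theorem essential_edge_laplacian_charpoly
    (N L : ℕ) (hN : 0 < N) (hNL : N - 1 ≤ L)
    (E Eow : Matrix (Fin N) (Fin L) ℝ)
    (ET : Matrix (Fin N) (Fin (N - 1)) ℝ) (hETrank : ET.rank = N - 1)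
    (R : Matrix (Fin (N - 1)) (Fin L) ℝ) (hER : E = ET * R)
    (Θ : Matrix (Fin L) (Fin (L - (N - 1))) ℝ)
    (hΘorth : Θᵀ * Θ = 1) (hΘflow : E * Θ = 0)
    (hΘspan : ∀ y : Fin L → ℝ, E.mulVec y = 0 → ∃ c, Θ.mulVec c = y) :
    (Eᵀ * Eow).charpoly = Polynomial.X ^ (L - (N - 1)) * (ETᵀ * Eow * Rᵀ).charpoly ∧
    ((Eᵀ * Eow).map Complex.ofReal).charpoly.roots.filter (· ≠ 0) =
      ((ETᵀ * Eow * Rᵀ).map Complex.ofReal).charpoly.roots.filter (· ≠ 0) :=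
  essential_edge_laplacian_charpoly_general N L hNL E Eow ET R hER
end

section
/- Let H be symmetric positive definite of size (N−1) solving H L̂_e + L̂_e^T H = I. For σ > sqrt(λ_max(H)/2 + 1), the matrices P = [[σH, H],[H, σH]] and Q = [[σ² I, σ³ I − σH],[σ³ I − σH, σ⁴ I − 2H]] are both symmetric positive definite. -/
/-!
Both matrices are handled by the Schur complement of their upper left block. For `P` it is
`σH - H (σH)⁻¹ H = (σ - σ⁻¹) H`, positive since `σ > 1`. For `Q` it is
`σ⁴ - 2H - σ⁻²(σ³ - σH)² = 2(σ² - 1) H - H²`, a function of `H` whose values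
`2(σ² - 1) λ - λ²` at the eigenvalues `0 < λ ≤ λ_max < 2(σ² - 1)` are positive.
Symmetry of a real positive definite matrix is automatic.
-/

open Matrix
open scoped ComplexOrder MatrixOrder

namespace Matrix

section SchurComplement

variable {𝕜 m n : Type*} [RCLike 𝕜] [Fintype m] [Fintype n] [DecidableEq m] [DecidableEq n]

/- Both sides are positive semidefinite by `Matrix.PosDef.fromBlocks₁₁`, and
`det_fromBlocks₁₁` shows that they are invertible together. -/
theorem posDef_fromBlocks₁₁_iff {A : Matrix m m 𝕜} (B : Matrix m n 𝕜) (D : Matrix n n 𝕜)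
    (hA : A.PosDef) : (fromBlocks A B Bᴴ D).PosDef ↔ (D - Bᴴ * A⁻¹ * B).PosDef := by
  let _ := hA.isUnit.invertible
  have hdet := det_fromBlocks₁₁ A B Bᴴ D
  rw [invOf_eq_nonsing_inv] at hdet
  constructor
  · intro h
    rw [((PosDef.fromBlocks₁₁ B D hA).mp h.posSemidef).posDef_iff_det_ne_zero]
    exact right_ne_zero_of_mul (hdet ▸ h.det_pos.ne')
  · intro h
    rw [((PosDef.fromBlocks₁₁ B D hA).mpr h.posSemidef).posDef_iff_det_ne_zero, hdet]
    exact mul_ne_zero hA.det_pos.ne' h.det_pos.ne'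

end SchurComplement

section Real

variable {n : Type*}

theorem PosDef.isSymm {M : Matrix n n ℝ} (hM : M.PosDef) : M.IsSymm :=
  isHermitian_iff_isSymm.mp hM.1

theorem PosDef.smul_sub_mul_self [Fintype n] [DecidableEq n] {H : Matrix n n ℝ}
    (hH : H.PosDef) {c : ℝ} (hc : ∀ i, hH.1.eigenvalues i < c) : (c • H - H * H).PosDef := by
  rw [← isStrictlyPositive_iff_posDef]
  have hcfc : c • H - H * H = cfc (fun x => c * x - x * x) H := by
    rw [cfc_sub _ _ H, cfc_const_mul _ _ H, cfc_mul _ _ H, cfc_id' ℝ H]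
  rw [hcfc, cfc_isStrictlyPositive_iff _ H, hH.1.spectrum_real_eq_range_eigenvalues]
  rintro _ ⟨i, rfl⟩
  nlinarith [hH.eigenvalues_pos i, hc i]

end Real

section SchurIdentities

variable {K n : Type*} [Field K] [Fintype n] [DecidableEq n]

theorem smul_sub_mul_inv_smul_mul {H : Matrix n n K} (hH : IsUnit H) {σ : K} (hσ : σ ≠ 0) :
    σ • H - H * (σ • H)⁻¹ * H = (σ - σ⁻¹) • H := by
  have hH' : IsUnit H.det := (isUnit_iff_isUnit_det H).mp hH
  let _ := invertibleOfNonzero hσ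
  rw [inv_smul H σ hH', invOf_eq_inv, mul_smul_comm,
    smul_mul_assoc, mul_nonsing_inv H hH', Matrix.one_mul, sub_smul]

theorem schur_complement_Q (H : Matrix n n K) {σ : K} (hσ : σ ≠ 0) :
    σ ^ 4 • (1 : Matrix n n K) - (2 : K) • H
        - (σ ^ 3 • 1 - σ • H) * (σ ^ 2 • (1 : Matrix n n K))⁻¹ * (σ ^ 3 • 1 - σ • H)
      = (2 * (σ ^ 2 - 1)) • H - H * H := by
  let _ := invertibleOfNonzero (pow_ne_zero 2 hσ)
  rw [inv_smul 1 _ (by simp), invOf_eq_inv, inv_one]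
  simp only [Matrix.sub_mul, Matrix.mul_sub, smul_mul_assoc, mul_smul_comm, Matrix.one_mul,
    Matrix.mul_one]
  match_scalars <;> field_simp <;> ring

end SchurIdentities

end Matrix

theorem P_and_Q_posdef_general
    (m : ℕ) (H : Matrix (Fin m) (Fin m) ℝ)
    (hH : H.PosDef)
    (σ : ℝ) (hσ : Real.sqrt ((⨆ i, hH.1.eigenvalues i) / 2 + 1) < σ) :
    ((Matrix.fromBlocks (σ • H) H H (σ • H)).IsSymm ∧
      (Matrix.fromBlocks (σ • H) H H (σ • H)).PosDef) ∧
    ((Matrix.fromBlocks (σ ^ 2 • (1 : Matrix (Fin m) (Fin m) ℝ))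
        (σ ^ 3 • (1 : Matrix (Fin m) (Fin m) ℝ) - σ • H)
        (σ ^ 3 • (1 : Matrix (Fin m) (Fin m) ℝ) - σ • H)
        (σ ^ 4 • (1 : Matrix (Fin m) (Fin m) ℝ) - (2 : ℝ) • H)).IsSymm ∧
      (Matrix.fromBlocks (σ ^ 2 • (1 : Matrix (Fin m) (Fin m) ℝ))
        (σ ^ 3 • (1 : Matrix (Fin m) (Fin m) ℝ) - σ • H)
        (σ ^ 3 • (1 : Matrix (Fin m) (Fin m) ℝ) - σ • H)
        (σ ^ 4 • (1 : Matrix (Fin m) (Fin m) ℝ) - (2 : ℝ) • H)).PosDef) := by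
  have hev : ∀ i, hH.1.eigenvalues i ≤ ⨆ j, hH.1.eigenvalues j :=
    le_ciSup (Finite.bddAbove_range _)
  have hev0 : 0 ≤ ⨆ i, hH.1.eigenvalues i := Real.iSup_nonneg fun i => (hH.eigenvalues_pos i).le
  have hσ2 := Real.lt_sq_of_sqrt_lt hσ
  have hσ0 : 0 < σ := (Real.sqrt_nonneg _).trans_lt hσ
  have hσ1 : 1 < σ := by nlinarith
  have hH_star : Hᴴ = H := hH.1
  have hB_star : (σ ^ 3 • (1 : Matrix (Fin m) (Fin m) ℝ) - σ • H)ᴴ = σ ^ 3 • 1 - σ • H := by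
    simp [hH.isSymm.eq]
  have hP : (fromBlocks (σ • H) H H (σ • H)).PosDef := by
    have hS : (σ • H - Hᴴ * (σ • H)⁻¹ * H).PosDef := by
      rw [hH_star, smul_sub_mul_inv_smul_mul hH.isUnit hσ0.ne']
      exact hH.smul (by rw [sub_pos]; exact (inv_lt_one_of_one_lt₀ hσ1).trans hσ1)
    simpa only [hH_star] using (posDef_fromBlocks₁₁_iff H _ (hH.smul hσ0)).mpr hS
  have hQ : (fromBlocks (σ ^ 2 • (1 : Matrix (Fin m) (Fin m) ℝ)) (σ ^ 3 • 1 - σ • H)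
      (σ ^ 3 • 1 - σ • H) (σ ^ 4 • 1 - (2 : ℝ) • H)).PosDef := by
    nth_rewrite 2 [← hB_star]
    rw [posDef_fromBlocks₁₁_iff _ _ ((PosDef.one (n := Fin m) (R := ℝ)).smul (pow_pos hσ0 2)),
      hB_star, schur_complement_Q H hσ0.ne']
    exact hH.smul_sub_mul_self fun i => by linarith [hev i]
  exact ⟨⟨hP.isSymm, hP⟩, ⟨hQ.isSymm, hQ⟩⟩

/-- Let `H` be symmetric positive definite of size `N − 1` solving the
Lyapunov equation `H L̂_e + L̂_eᵀ H = I`. For `σ > √(λ_max(H)/2 + 1)`, the matrices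
`P = [[σH, H],[H, σH]]` and `Q = [[σ²I, σ³I − σH],[σ³I − σH, σ⁴I − 2H]]` are both
symmetric positive definite. -/
theorem P_and_Q_posdef
    (m : ℕ) (H Le : Matrix (Fin m) (Fin m) ℝ)
    (hHsymm : H.IsSymm) (hH : H.PosDef)
    (hLyap : H * Le + Leᵀ * H = 1)
    (σ : ℝ) (hσ : Real.sqrt ((⨆ i, hH.1.eigenvalues i) / 2 + 1) < σ) :
    ((Matrix.fromBlocks (σ • H) H H (σ • H)).IsSymm ∧
      (Matrix.fromBlocks (σ • H) H H (σ • H)).PosDef) ∧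
    ((Matrix.fromBlocks (σ ^ 2 • (1 : Matrix (Fin m) (Fin m) ℝ))
        (σ ^ 3 • (1 : Matrix (Fin m) (Fin m) ℝ) - σ • H)
        (σ ^ 3 • (1 : Matrix (Fin m) (Fin m) ℝ) - σ • H)
        (σ ^ 4 • (1 : Matrix (Fin m) (Fin m) ℝ) - (2 : ℝ) • H)).IsSymm ∧
      (Matrix.fromBlocks (σ ^ 2 • (1 : Matrix (Fin m) (Fin m) ℝ))
        (σ ^ 3 • (1 : Matrix (Fin m) (Fin m) ℝ) - σ • H)
        (σ ^ 3 • (1 : Matrix (Fin m) (Fin m) ℝ) - σ • H)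
        (σ ^ 4 • (1 : Matrix (Fin m) (Fin m) ℝ) - (2 : ℝ) • H)).PosDef) :=
  P_and_Q_posdef_general m H hH σ hσ
end

section
/- Invariant region and finite-time reachability: under V̇(z) ≤ −λ_min(Q)|z|(|z| − Θ μΔ) with V(z) = z^T P z, the sublevel sets R₁ = {z : V(z) ≤ λ_min(P)M²μ²} and R₂ = {z : V(z) ≤ λ_max(P)Θ²Δ²(1+ε)²μ²} are forward invariant, and on R₁ \ R₂ one has V̇ ≤ −(λ_min(Q)/λ_max(P))·(ε/(1+ε))·V, so any trajectory starting in R₁ enters R₂ within time T = (λ_max(P)(1+ε)/(λ_min(Q)ε)) ln( λ_min(P)M² / (λ_max(P)Θ²Δ²(1+ε)²) ). -/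
/-!
Since `V ≤ λ_max(P) |z|²`, the level `V = λ_max(P) b²` forces `|z| ≥ b`; for `b > Θ μ Δ` the
dissipation bound then gives `V̇ < 0` there, which makes `R₁` and `R₂` forward invariant.
Outside `R₂` one has `|z| ≥ (1 + ε) Θ μ Δ`, so `|z| - Θ μ Δ ≥ (ε / (1 + ε)) |z|` and
`V̇ ≤ -α V` with `α = λ_min(Q) ε / (λ_max(P) (1 + ε))`; by Grönwall, `V` cannot stay above the
level of `R₂` for longer than `α⁻¹` times the logarithm of the ratio of the two levels.
-/

open Matrix Set Real

theorem sublevel_forward_invariant {V : ℝ → ℝ} {c : ℝ} (hV : Differentiable ℝ V)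
    (hboundary : ∀ t, V t = c → deriv V t < 0) {t₀ t₁ : ℝ} (ht : t₀ ≤ t₁) (h₀ : V t₀ ≤ c) :
    V t₁ ≤ c :=
  image_le_of_deriv_right_lt_deriv_boundary hV.continuous.continuousOn
    (fun t _ => (hV t).hasDerivAt.hasDerivWithinAt) (B := fun _ => c) (B' := fun _ => 0) h₀
    (fun _ => hasDerivAt_const _ _) (fun t _ => hboundary t) ⟨ht, le_rfl⟩

theorem le_mul_exp_of_deriv_le_neg_mul {V : ℝ → ℝ} {α t₀ t₁ : ℝ} (hV : Differentiable ℝ V)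
    (hdecay : ∀ t ∈ Ico t₀ t₁, deriv V t ≤ -α * V t) (ht : t₀ ≤ t₁) :
    V t₁ ≤ V t₀ * exp (-α * (t₁ - t₀)) := by
  have := le_gronwallBound_of_liminf_deriv_right_le (ε := 0) hV.continuous.continuousOn
    (fun t _ _ hr => (hV t).hasDerivAt.hasDerivWithinAt.liminf_right_slope_le hr) le_rfl
    (fun t ht => (add_zero (-α * V t)).symm ▸ hdecay t ht) t₁ ⟨ht, le_rfl⟩
  rwa [gronwallBound_ε0] at this

theorem exists_le_of_deriv_le_neg_mul {V : ℝ → ℝ} {α c C t₀ : ℝ} (hV : Differentiable ℝ V)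
    (hα : 0 < α) (hc : 0 < c) (hcC : c ≤ C) (hdecay : ∀ t, c ≤ V t → deriv V t ≤ -α * V t)
    (h₀ : V t₀ ≤ C) : ∃ t₁ ∈ Icc t₀ (t₀ + α⁻¹ * log (C / c)), V t₁ ≤ c := by
  set T := α⁻¹ * log (C / c)
  have hT : 0 ≤ T := mul_nonneg (inv_nonneg.2 hα.le) (log_nonneg ((one_le_div hc).2 hcC))
  by_contra! habove
  have hdecay' : ∀ t ∈ Ico t₀ (t₀ + T), deriv V t ≤ -α * V t :=
    fun t ht => hdecay t (habove t (Ico_subset_Icc_self ht)).le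
  have hend : V (t₀ + T) ≤ c :=
    calc V (t₀ + T) ≤ V t₀ * exp (-α * (t₀ + T - t₀)) :=
          le_mul_exp_of_deriv_le_neg_mul hV hdecay' (by linarith)
      _ ≤ C * exp (-log (C / c)) := by
          rw [add_sub_cancel_left, neg_mul, mul_inv_cancel_left₀ hα.ne']
          gcongr
      _ = c := by
          have hC : 0 < C := hc.trans_le hcC
          rw [exp_neg, exp_log (div_pos hC hc)]
          field_simp
  exact (habove _ ⟨by linarith, le_rfl⟩).not_ge hend

section ShellEstimates

variable {V s : ℝ → ℝ} {lmax lq θ : ℝ}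

theorem le_sqrt_of_mul_sq_le (hVs : ∀ t, V t ≤ lmax * s t) (hlmax : 0 < lmax) {b t : ℝ}
    (hbV : lmax * b ^ 2 ≤ V t) : b ≤ √(s t) :=
  le_sqrt_of_sq_le (le_of_mul_le_mul_left (hbV.trans (hVs t)) hlmax)

theorem deriv_neg_of_mul_sq_le (hVs : ∀ t, V t ≤ lmax * s t)
    (hdecay : ∀ t, deriv V t ≤ -lq * √(s t) * (√(s t) - θ)) (hlmax : 0 < lmax) (hlq : 0 < lq)
    (hθ : 0 ≤ θ) {b t : ℝ} (hθb : θ < b) (hbV : lmax * b ^ 2 ≤ V t) : deriv V t < 0 := by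
  have hr : θ < √(s t) := hθb.trans_le (le_sqrt_of_mul_sq_le hVs hlmax hbV)
  have hpos : 0 < lq * √(s t) * (√(s t) - θ) :=
    mul_pos (mul_pos hlq (hθ.trans_lt hr)) (sub_pos.2 hr)
  linarith [hdecay t]

theorem deriv_le_neg_mul_of_mul_sq_le (hVs : ∀ t, V t ≤ lmax * s t)
    (hdecay : ∀ t, deriv V t ≤ -lq * √(s t) * (√(s t) - θ)) (hlmax : 0 < lmax) (hlq : 0 ≤ lq)
    {ε t : ℝ} (hε : 0 < ε) (hV : lmax * ((1 + ε) * θ) ^ 2 ≤ V t) :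
    deriv V t ≤ -(lq / lmax) * (ε / (1 + ε)) * V t := by
  set r := √(s t)
  have hr : (1 + ε) * θ ≤ r := le_sqrt_of_mul_sq_le hVs hlmax hV
  have hgap : ε / (1 + ε) * r ≤ r - θ := by
    rw [div_mul_eq_mul_div, div_le_iff₀ (by positivity)]
    linarith
  have hs : 0 ≤ s t := nonneg_of_mul_nonneg_right ((by positivity : (0 : ℝ) ≤ _).trans
    (hV.trans (hVs t))) hlmax
  have hVr : V t ≤ lmax * r ^ 2 := (hVs t).trans_eq (by rw [sq_sqrt hs])
  calc deriv V t ≤ -lq * r * (r - θ) := hdecay t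
    _ ≤ -lq * r * (ε / (1 + ε) * r) := by
        have := mul_le_mul_of_nonneg_left hgap (mul_nonneg hlq (sqrt_nonneg (s t)))
        linarith
    _ = -(lq / lmax) * (ε / (1 + ε)) * (lmax * r ^ 2) := by field_simp
    _ ≤ -(lq / lmax) * (ε / (1 + ε)) * V t :=
        mul_le_mul_of_nonpos_left hVr (by rw [neg_mul]; exact neg_nonpos.2 (by positivity))

end ShellEstimates

theorem invariant_regions_and_finite_time_reach_general
    (d : ℕ) (P : Matrix (Fin d) (Fin d) ℝ)
    (lmin lmax lq Θc Δ μ ε M : ℝ)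
    (hlmin : 0 < lmin) (hlmax : 0 < lmax) (hlq : 0 < lq) (hΘc : 0 < Θc)
    (hΔ : 0 < Δ) (hμ : 0 < μ) (hε : 0 < ε)
    (hhigh : ∀ v : Fin d → ℝ, v ⬝ᵥ P.mulVec v ≤ lmax * (v ⬝ᵥ v))
    (hgap : Θc * Δ * (1 + ε) < Real.sqrt (lmin / lmax) * M)
    (z : ℝ → Fin d → ℝ) (V : ℝ → ℝ)
    (hV : ∀ t, V t = z t ⬝ᵥ P.mulVec (z t))
    (hVdiff : ∀ t, DifferentiableAt ℝ V t)
    (hdecay : ∀ t, deriv V t ≤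
      -lq * Real.sqrt (z t ⬝ᵥ z t) * (Real.sqrt (z t ⬝ᵥ z t) - Θc * μ * Δ)) :
    (∀ t₀ t₁, t₀ ≤ t₁ → V t₀ ≤ lmin * M ^ 2 * μ ^ 2 → V t₁ ≤ lmin * M ^ 2 * μ ^ 2) ∧
    (∀ t₀ t₁, t₀ ≤ t₁ → V t₀ ≤ lmax * Θc ^ 2 * Δ ^ 2 * (1 + ε) ^ 2 * μ ^ 2 →
      V t₁ ≤ lmax * Θc ^ 2 * Δ ^ 2 * (1 + ε) ^ 2 * μ ^ 2) ∧
    (∀ t, V t ≤ lmin * M ^ 2 * μ ^ 2 →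
      lmax * Θc ^ 2 * Δ ^ 2 * (1 + ε) ^ 2 * μ ^ 2 ≤ V t →
      deriv V t ≤ -(lq / lmax) * (ε / (1 + ε)) * V t) ∧
    (∀ t₀, V t₀ ≤ lmin * M ^ 2 * μ ^ 2 →
      ∃ t₁ ∈ Set.Icc t₀ (t₀ +
        lmax * (1 + ε) / (lq * ε) *
          Real.log (lmin * M ^ 2 / (lmax * Θc ^ 2 * Δ ^ 2 * (1 + ε) ^ 2))),
        V t₁ ≤ lmax * Θc ^ 2 * Δ ^ 2 * (1 + ε) ^ 2 * μ ^ 2) := by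
  set θ := Θc * μ * Δ
  have hθ : 0 ≤ θ := by positivity
  have hVs : ∀ t, V t ≤ lmax * (z t ⬝ᵥ z t) := fun t => (hV t).trans_le (hhigh (z t))
  have hboundary : ∀ b, θ < b → ∀ t, V t = lmax * b ^ 2 → deriv V t < 0 := fun b hb t ht =>
    deriv_neg_of_mul_sq_le (s := fun t => z t ⬝ᵥ z t) hVs hdecay hlmax hlq hθ hb ht.ge
  have hb₂ : θ < (1 + ε) * θ := lt_mul_of_one_lt_left (by positivity) (by linarith)
  have hb₁ : (1 + ε) * θ < √(lmin / lmax) * M * μ := by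
    have := mul_lt_mul_of_pos_right hgap hμ
    linarith
  have hc₁ : lmax * (√(lmin / lmax) * M * μ) ^ 2 = lmin * M ^ 2 * μ ^ 2 := by
    rw [mul_pow, mul_pow, sq_sqrt (by positivity)]
    field_simp
  have hc₂ : lmax * ((1 + ε) * θ) ^ 2 = lmax * Θc ^ 2 * Δ ^ 2 * (1 + ε) ^ 2 * μ ^ 2 := by ring
  have hrate : ∀ t, lmax * Θc ^ 2 * Δ ^ 2 * (1 + ε) ^ 2 * μ ^ 2 ≤ V t →
      deriv V t ≤ -(lq / lmax) * (ε / (1 + ε)) * V t := fun t ht =>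
    deriv_le_neg_mul_of_mul_sq_le (s := fun t => z t ⬝ᵥ z t) hVs hdecay hlmax hlq.le hε
      (hc₂ ▸ ht)
  refine ⟨fun _ _ => sublevel_forward_invariant hVdiff (hc₁ ▸ hboundary _ (hb₂.trans hb₁)),
    fun _ _ => sublevel_forward_invariant hVdiff (hc₂ ▸ hboundary _ hb₂),
    fun t _ => hrate t, fun t₀ h₀ => ?_⟩
  have hc₂₁ : lmax * Θc ^ 2 * Δ ^ 2 * (1 + ε) ^ 2 * μ ^ 2 ≤ lmin * M ^ 2 * μ ^ 2 := by
    rw [← hc₁, ← hc₂]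
    gcongr
  obtain ⟨t₁, ht₁, hV₁⟩ := exists_le_of_deriv_le_neg_mul (α := lq / lmax * (ε / (1 + ε)))
    hVdiff (by positivity) (by positivity) hc₂₁ (fun t ht => (hrate t ht).trans_eq (by ring)) h₀
  refine ⟨t₁, ?_, hV₁⟩
  convert ht₁ using 4
  · field_simp
  · congr 1
    field_simp

/-- Invariant region and finite-time reachability. Under
`V̇(z) ≤ −λ_min(Q)|z|(|z| − Θ μΔ)` with `V(z) = zᵀPz` (where
`lmin |v|² ≤ vᵀPv ≤ lmax |v|²` with `lmin, lmax` playing the role of `λ_min(P), λ_max(P)`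
and `lq` that of `λ_min(Q)`, and `√(lmin/lmax) M > Θ Δ (1+ε)` so that `R₂ ⊂ R₁`), the
sublevel sets `R₁ = {V ≤ lmin M² μ²}` and `R₂ = {V ≤ lmax Θ² Δ² (1+ε)² μ²}` are forward
invariant; on `R₁ \ R₂` one has `V̇ ≤ −(lq/lmax)(ε/(1+ε)) V`; and any trajectory starting
in `R₁` enters `R₂` within time
`T = (lmax(1+ε)/(lq ε)) ln(lmin M² / (lmax Θ² Δ² (1+ε)²))`. -/
theorem invariant_regions_and_finite_time_reach
    (d : ℕ) (P : Matrix (Fin d) (Fin d) ℝ) (hP : P.PosDef)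
    (lmin lmax lq Θc Δ μ ε M : ℝ)
    (hlmin : 0 < lmin) (hlmax : 0 < lmax) (hlq : 0 < lq) (hΘc : 0 < Θc)
    (hΔ : 0 < Δ) (hμ : 0 < μ) (hε : 0 < ε) (hM : 0 < M)
    (hlow : ∀ v : Fin d → ℝ, lmin * (v ⬝ᵥ v) ≤ v ⬝ᵥ P.mulVec v)
    (hhigh : ∀ v : Fin d → ℝ, v ⬝ᵥ P.mulVec v ≤ lmax * (v ⬝ᵥ v))
    (hgap : Θc * Δ * (1 + ε) < Real.sqrt (lmin / lmax) * M)
    (z : ℝ → Fin d → ℝ) (V : ℝ → ℝ)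
    (hV : ∀ t, V t = z t ⬝ᵥ P.mulVec (z t))
    (hVdiff : ∀ t, DifferentiableAt ℝ V t)
    (hdecay : ∀ t, deriv V t ≤
      -lq * Real.sqrt (z t ⬝ᵥ z t) * (Real.sqrt (z t ⬝ᵥ z t) - Θc * μ * Δ)) :
    (∀ t₀ t₁, t₀ ≤ t₁ → V t₀ ≤ lmin * M ^ 2 * μ ^ 2 → V t₁ ≤ lmin * M ^ 2 * μ ^ 2) ∧
    (∀ t₀ t₁, t₀ ≤ t₁ → V t₀ ≤ lmax * Θc ^ 2 * Δ ^ 2 * (1 + ε) ^ 2 * μ ^ 2 →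
      V t₁ ≤ lmax * Θc ^ 2 * Δ ^ 2 * (1 + ε) ^ 2 * μ ^ 2) ∧
    (∀ t, V t ≤ lmin * M ^ 2 * μ ^ 2 →
      lmax * Θc ^ 2 * Δ ^ 2 * (1 + ε) ^ 2 * μ ^ 2 ≤ V t →
      deriv V t ≤ -(lq / lmax) * (ε / (1 + ε)) * V t) ∧
    (∀ t₀, V t₀ ≤ lmin * M ^ 2 * μ ^ 2 →
      ∃ t₁ ∈ Set.Icc t₀ (t₀ +
        lmax * (1 + ε) / (lq * ε) *
          Real.log (lmin * M ^ 2 / (lmax * Θc ^ 2 * Δ ^ 2 * (1 + ε) ^ 2))),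
        V t₁ ≤ lmax * Θc ^ 2 * Δ ^ 2 * (1 + ε) ^ 2 * μ ^ 2) :=
  invariant_regions_and_finite_time_reach_general d P lmin lmax lq Θc Δ μ ε M hlmin hlmax hlq hΘc hΔ
    hμ hε hhigh hgap z V hV hVdiff hdecay
end
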